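/- For a T1 topological space X the following are equivalent: (a) X is normal; (b) every locally finite open cover (Uᵢ)_{i∈ι} of X admits a subordinate partition of unity, i.e. a family of continuous nonnegative functions φᵢ : X → ℝ whose family of supports is locally finite, whose pointwise sum is identically 1, and such that the closure of the support of φᵢ is contained in Uᵢ for every i ∈ ι. -/
import Mathlib

universe u v

/-- A T1 space is normal if and only if every locally finite open cover admits a
subordinate partition of unity (with locally finite supports). -/
theorem stmt_4 {X : Type u} [TopologicalSpace X] [T1Space X] :
    NormalSpace X ↔
      ∀ (ι : Type v) (U : ι → Set X), (∀ i, IsOpen (U i)) → LocallyFinite U →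
        (⋃ i, U i) = Set.univ →
        ∃ φ : ι → X → ℝ, (∀ i, Continuous (φ i)) ∧ (∀ i x, 0 ≤ φ i x) ∧
          LocallyFinite (fun i => Function.support (φ i)) ∧
          (∀ x, ∑ᶠ i, φ i x = 1) ∧ ∀ i, tsupport (φ i) ⊆ U i := by
  constructor
  · intro hN ι U ho hlf hU
    obtain ⟨f, hf⟩ := PartitionOfUnity.exists_isSubordinate_of_locallyFinite
      isClosed_univ U ho hlf (hU ▸ Set.Subset.rfl)
    exact ⟨fun i => f i, fun i => (f i).continuous, fun i x => f.nonneg i x,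
      f.locallyFinite, fun x => f.sum_eq_one (Set.mem_univ x), hf⟩
  · intro h
    constructor
    intro s t hs ht hst
    set U : ULift.{v} Bool → Set X := fun b => if b.down then sᶜ else tᶜ with hUdef
    have ho : ∀ b, IsOpen (U b) := by
      rintro ⟨b⟩; cases b <;> simp [U, hs.isOpen_compl, ht.isOpen_compl]
    have hcov : (⋃ b, U b) = Set.univ := by
      apply Set.eq_univ_of_forall
      intro x
      rcases Set.disjoint_left.mp hst.symm.le_compl_right.disjoint_compl_right.symm with _
      by_cases hxs : x ∈ s
      · exact Set.mem_iUnion.mpr ⟨⟨false⟩, by simpa [U] using Set.disjoint_left.mp hst hxs⟩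
      · exact Set.mem_iUnion.mpr ⟨⟨true⟩, by simpa [U] using hxs⟩
    obtain ⟨φ, hcont, hnn, _, hsum, hsupp⟩ :=
      h (ULift.{v} Bool) U ho (locallyFinite_of_finite U) hcov
    set f : X → ℝ := φ ⟨true⟩ with hf
    have hfs : ∀ x ∈ s, f x = 0 := by
      intro x hx
      by_contra hne
      have : x ∈ tsupport (φ ⟨true⟩) := subset_closure hne
      exact (hsupp ⟨true⟩ this) hx
    have hft : ∀ x ∈ t, f x = 1 := by
      intro x hx
      have h0 : ∀ b : ULift.{v} Bool, b ≠ ⟨true⟩ → φ b x = 0 := by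
        rintro ⟨b⟩ hb
        cases b
        · by_contra hne
          have : x ∈ tsupport (φ ⟨false⟩) := subset_closure hne
          exact (hsupp ⟨false⟩ this) hx
        · exact absurd rfl hb
      have := hsum x
      rwa [finsum_eq_single _ _ h0] at this
    refine ⟨f ⁻¹' Set.Iio (1/2), f ⁻¹' Set.Ioi (1/2),
      (isOpen_Iio).preimage (hcont _), (isOpen_Ioi).preimage (hcont _),
      fun x hx => by simp [hfs x hx], fun x hx => by simp [hft x hx]; norm_num, ?_⟩
    exact Set.disjoint_left.mpr fun x h1 h2 => lt_asymm (show f x < 1/2 from h1) h2
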